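/- arXiv:2603.00013 — 2 statements merged into one kernel-verified Lean document; each statement's English description precedes it below -/
import Mathlib

section
/- Let X and U be real Banach spaces, A : X → X and Q : U → X bounded linear operators, t ≥ 0, and let u : ℝ → U be differentiable with derivative u' such that u' is continuous. Then ∫₀^t exp((t−s) A) (Q (u'(s))) ds = Q(u(t)) − exp(t A)(Q(u(0))) + ∫₀^t exp((t−s) A) (A (Q (u(s)))) ds, where exp(r A) denotes the operator exponential of r A (the norm-convergent exponential series in the Banach algebra of bounded operators on X) and the integrals are Bochner integrals. -/
open NormedSpace intervalIntegral

/-! The function `s ↦ exp((t - s) A) f(s)` has derivative `exp((t - s) A) (f'(s) - A f(s))`, so the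
identity is the fundamental theorem of calculus for it on `[0, t]`, where its endpoint values are
`exp(t A) f(0)` and `f(t)`. -/

theorem hasDerivAt_exp_sub_smul {𝕂 𝔸 : Type*} [RCLike 𝕂] [NormedRing 𝔸] [NormedAlgebra 𝕂 𝔸]
    [CompleteSpace 𝔸] (x : 𝔸) (t s : 𝕂) :
    HasDerivAt (fun s : 𝕂 => exp ((t - s) • x)) (-(exp ((t - s) • x) * x)) s := by
  have hsub : HasDerivAt (fun s : 𝕂 => t - s) (-1) s := (hasDerivAt_id s).const_sub t
  simpa [Function.comp_def] using (hasDerivAt_exp_smul_const x (t - s)).scomp s hsub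

section ContinuousLinearMap

variable {X : Type*} [NormedAddCommGroup X] [NormedSpace ℝ X] [CompleteSpace X]

theorem hasDerivAt_exp_sub_smul_apply (A : X →L[ℝ] X) (t : ℝ) {f : ℝ → X} {f' : X} {s : ℝ}
    (hf : HasDerivAt f f' s) :
    HasDerivAt (fun s => exp ((t - s) • A) (f s)) (exp ((t - s) • A) (f' - A (f s))) s := by
  convert (hasDerivAt_exp_sub_smul A t s).clm_apply hf using 1
  rw [map_sub, neg_apply, mul_apply_eq_comp]
  abel

theorem integral_exp_sub_smul_apply_deriv (A : X →L[ℝ] X) {f f' : ℝ → X}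
    (hf : ∀ s, HasDerivAt f (f' s) s) (hf' : Continuous f') (a b : ℝ) :
    ∫ s in a..b, exp ((b - s) • A) (f' s) =
      f b - exp ((b - a) • A) (f a) + ∫ s in a..b, exp ((b - s) • A) (A (f s)) := by
  have hexp : Continuous fun s : ℝ => exp ((b - s) • A) :=
    Differentiable.continuous fun s => (hasDerivAt_exp_sub_smul A b s).differentiableAt
  have hfc : Continuous f := Differentiable.continuous fun s => (hf s).differentiableAt
  have hi₁ : IntervalIntegrable (fun s => exp ((b - s) • A) (f' s)) MeasureTheory.volume a b :=
    (hexp.clm_apply hf').intervalIntegrable a b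
  have hi₂ : IntervalIntegrable (fun s => exp ((b - s) • A) (A (f s))) MeasureTheory.volume a b :=
    (hexp.clm_apply (A.continuous.comp hfc)).intervalIntegrable a b
  have hftc := integral_eq_sub_of_hasDerivAt
    (fun s _ => hasDerivAt_exp_sub_smul_apply A b (hf s)) (by simpa using hi₁.sub hi₂)
  simp only [map_sub, integral_sub hi₁ hi₂, sub_self, zero_smul, exp_zero,
    one_apply_eq_self] at hftc
  exact eq_add_of_sub_eq hftc

end ContinuousLinearMap

theorem fattorini_integration_by_parts_general
    {X U : Type*} [NormedAddCommGroup X] [NormedSpace ℝ X] [CompleteSpace X]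
    [NormedAddCommGroup U] [NormedSpace ℝ U]
    (A : X →L[ℝ] X) (Q : U →L[ℝ] X) (t : ℝ)
    (u u' : ℝ → U) (hderiv : ∀ s : ℝ, HasDerivAt u (u' s) s)
    (hcont : Continuous u') :
    ∫ s in (0 : ℝ)..t, (NormedSpace.exp ((t - s) • A)) (Q (u' s)) =
      Q (u t) - (NormedSpace.exp (t • A)) (Q (u 0)) +
        ∫ s in (0 : ℝ)..t, (NormedSpace.exp ((t - s) • A)) (A (Q (u s))) := by
  have hQu : ∀ s, HasDerivAt (fun s => Q (u s)) (Q (u' s)) s := fun s =>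
    Q.hasFDerivAt.comp_hasDerivAt s (hderiv s)
  simpa using integral_exp_sub_smul_apply_deriv A hQu (Q.continuous.comp hcont) 0 t

/-- Integration by parts for the convolution with a uniformly continuous semigroup
`exp((t−s)A)` (bounded generator `A`): the discrete-level Fattorini computation. -/
theorem fattorini_integration_by_parts
    {X U : Type*} [NormedAddCommGroup X] [NormedSpace ℝ X] [CompleteSpace X]
    [NormedAddCommGroup U] [NormedSpace ℝ U] [CompleteSpace U]
    (A : X →L[ℝ] X) (Q : U →L[ℝ] X) (t : ℝ) (ht : 0 ≤ t)
    (u u' : ℝ → U) (hderiv : ∀ s : ℝ, HasDerivAt u (u' s) s)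
    (hcont : Continuous u') :
    ∫ s in (0 : ℝ)..t, (NormedSpace.exp ((t - s) • A)) (Q (u' s)) =
      Q (u t) - (NormedSpace.exp (t • A)) (Q (u 0)) +
        ∫ s in (0 : ℝ)..t, (NormedSpace.exp ((t - s) • A)) (A (Q (u s))) :=
  fattorini_integration_by_parts_general A Q t u u' hderiv hcont
end

section
/- Let X be a real Banach space and for each n ∈ ℕ let Xₙ be a real Banach space with bounded linear operators Pₙ : X → Xₙ and Eₙ : Xₙ → X satisfying ‖Pₙ‖ ≤ μ_p and ‖Eₙ‖ ≤ μ_e for all n. Let U be a real normed space and t > 0. Suppose S : [0,∞) → L(X) and Sₙ : [0,∞) → L(Xₙ) satisfy: (i) for every r ≥ 0 and x ∈ X, Eₙ(Sₙ(r)(Pₙ x)) → S(r)x as n → ∞; (ii) ‖Sₙ(r)‖ ≤ Mₙ e^{−ωₙ r} for all r ≥ 0 with Mₙ → M* and ωₙ → ω* > 0. Then for every x₀ ∈ X and every r ∈ [0, t], ‖S(r) x₀‖ ≤ μ_p μ_e M* e^{−ω* r} ‖x₀‖. -/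
open Filter Topology

/-! The approximants `Eₙ Sₙ(r) Pₙ x₀` converge to `S(r) x₀` and their norms are bounded by
`μe Mₙ e^{-ωₙ r} μp ‖x₀‖`; passing to the limit in this bound gives the estimate. -/

theorem ContinuousLinearMap.norm_apply_apply_apply_le {X Y Z W : Type*}
    [SeminormedAddCommGroup X] [NormedSpace ℝ X] [SeminormedAddCommGroup Y] [NormedSpace ℝ Y]
    [SeminormedAddCommGroup Z] [NormedSpace ℝ Z] [SeminormedAddCommGroup W] [NormedSpace ℝ W]
    {P : X →L[ℝ] Y} {S : Y →L[ℝ] Z} {E : Z →L[ℝ] W} {μp K μe : ℝ}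
    (hP : ‖P‖ ≤ μp) (hS : ‖S‖ ≤ K) (hE : ‖E‖ ≤ μe) (x : X) :
    ‖E (S (P x))‖ ≤ μp * μe * K * ‖x‖ := by
  have hK : 0 ≤ K := (norm_nonneg _).trans hS
  have hμe : 0 ≤ μe := (norm_nonneg _).trans hE
  calc ‖E (S (P x))‖ ≤ ‖E‖ * (‖S‖ * (‖P‖ * ‖x‖)) :=
        (E.le_opNorm _).trans <| by
          gcongr
          exact (S.le_opNorm _).trans (by gcongr; exact P.le_opNorm x)
    _ ≤ μe * (K * (μp * ‖x‖)) := by gcongr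
    _ = μp * μe * K * ‖x‖ := by ring

theorem norm_le_of_tendsto_of_norm_le {ι E : Type*} [SeminormedAddCommGroup E]
    {l : Filter ι} [l.NeBot] {f : ι → E} {y : E} {c : ι → ℝ} {C : ℝ}
    (hf : Tendsto f l (𝓝 y)) (hc : Tendsto c l (𝓝 C)) (h : ∀ i, ‖f i‖ ≤ c i) : ‖y‖ ≤ C :=
  le_of_tendsto_of_tendsto' hf.norm hc h

theorem iss_beta_gain_transfer_general
    {X : Type*} [NormedAddCommGroup X] [NormedSpace ℝ X]
    {Xn : ℕ → Type*} [∀ n, NormedAddCommGroup (Xn n)] [∀ n, NormedSpace ℝ (Xn n)]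
    (P : ∀ n, X →L[ℝ] Xn n) (E : ∀ n, Xn n →L[ℝ] X)
    (μp μe : ℝ)
    (hP : ∀ n, ‖P n‖ ≤ μp) (hE : ∀ n, ‖E n‖ ≤ μe)
    (t : ℝ)
    (S : ℝ → X →L[ℝ] X) (Sn : ∀ n, ℝ → Xn n →L[ℝ] Xn n)
    (M ω : ℕ → ℝ) (Mstar ωstar : ℝ)
    (hconv : ∀ r : ℝ, 0 ≤ r → ∀ x : X,
      Tendsto (fun n => E n (Sn n r (P n x))) atTop (𝓝 (S r x)))
    (hbound : ∀ n, ∀ r : ℝ, 0 ≤ r → ‖Sn n r‖ ≤ M n * Real.exp (-ω n * r))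
    (hM : Tendsto M atTop (𝓝 Mstar)) (hω : Tendsto ω atTop (𝓝 ωstar)) :
    ∀ x₀ : X, ∀ r ∈ Set.Icc (0 : ℝ) t,
      ‖S r x₀‖ ≤ μp * μe * Mstar * Real.exp (-ωstar * r) * ‖x₀‖ := by
  intro x₀ r ⟨hr, _⟩
  have hrate : Tendsto (fun n => μp * μe * (M n * Real.exp (-ω n * r)) * ‖x₀‖) atTop
      (𝓝 (μp * μe * (Mstar * Real.exp (-ωstar * r)) * ‖x₀‖)) :=
    ((hM.mul (hω.neg.mul_const r).rexp).const_mul _).mul_const _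
  simpa only [mul_assoc] using norm_le_of_tendsto_of_norm_le (hconv r hr x₀) hrate fun n =>
    ContinuousLinearMap.norm_apply_apply_apply_le (hP n) (hbound n r hr) (hE n) x₀

/-- The β-gain part of the ISS theorem: under Trotter–Kato approximation assumptions with
uniform exponential decay `‖Sₙ(r)‖ ≤ Mₙ e^{−ωₙ r}`, the homogeneous part of the limit
system satisfies `‖S(r)x₀‖ ≤ μp μe M* e^{−ω* r} ‖x₀‖` on `[0, t]`. -/
theorem iss_beta_gain_transfer
    {X : Type*} [NormedAddCommGroup X] [NormedSpace ℝ X] [CompleteSpace X]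
    {Xn : ℕ → Type*} [∀ n, NormedAddCommGroup (Xn n)] [∀ n, NormedSpace ℝ (Xn n)]
    [∀ n, CompleteSpace (Xn n)]
    {U : Type*} [NormedAddCommGroup U] [NormedSpace ℝ U]
    (P : ∀ n, X →L[ℝ] Xn n) (E : ∀ n, Xn n →L[ℝ] X)
    (μp μe : ℝ) (hμp : 0 < μp) (hμe : 0 < μe)
    (hP : ∀ n, ‖P n‖ ≤ μp) (hE : ∀ n, ‖E n‖ ≤ μe)
    (t : ℝ) (ht : 0 < t)
    (S : ℝ → X →L[ℝ] X) (Sn : ∀ n, ℝ → Xn n →L[ℝ] Xn n)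
    (M ω : ℕ → ℝ) (Mstar ωstar : ℝ)
    (hconv : ∀ r : ℝ, 0 ≤ r → ∀ x : X,
      Tendsto (fun n => E n (Sn n r (P n x))) atTop (𝓝 (S r x)))
    (hbound : ∀ n, ∀ r : ℝ, 0 ≤ r → ‖Sn n r‖ ≤ M n * Real.exp (-ω n * r))
    (hM : Tendsto M atTop (𝓝 Mstar)) (hω : Tendsto ω atTop (𝓝 ωstar))
    (hωstar : 0 < ωstar) :
    ∀ x₀ : X, ∀ r ∈ Set.Icc (0 : ℝ) t,
      ‖S r x₀‖ ≤ μp * μe * Mstar * Real.exp (-ωstar * r) * ‖x₀‖ :=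
  iss_beta_gain_transfer_general P E μp μe hP hE t S Sn M ω Mstar ωstar hconv hbound hM hω
end
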